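/- Let d ≥ 1 and let ρ be a symmetric non-degenerate probability measure on ℝ^d (ρ(H) < 1 for every affine hyperplane H) with ∫_{ℝ^d} ‖z‖⁴ dρ(z) < ∞ and covariance matrix Σ. Let (U_i)_{i≥1} be i.i.d. random vectors with law ρ, let B_n² = ∑_{j=1}^n U_j ᵗU_j, and on the event where B_n² is invertible set a_{i,n} = (B_n²)^{−1/2} U_i for 1 ≤ i ≤ n. Then for every z ∈ ℝ^d, almost surely B_n² is invertible for all n large enough and n ∑_{i=1}^n ⟨z, a_{i,n}⟩⁴ → M₄(Σ^{−1/2}z) as n → ∞. -/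

import Mathlib

open MeasureTheory Filter Matrix Real

noncomputable section

/-- `T_n(x) = ∑ i, x_i ᵗx_i`. -/
def Tmat (d n : ℕ) (x : Fin n → Fin d → ℝ) : Matrix (Fin d) (Fin d) ℝ :=
  ∑ i, Matrix.vecMulVec (x i) (x i)

/-- `S_n(x) = x_1 + … + x_n`. -/
def Svec (d n : ℕ) (x : Fin n → Fin d → ℝ) : Fin d → ℝ := ∑ i, x i

/-- the Hamiltonian `(1/2)⟨T_n⁻¹ S_n, S_n⟩`. -/
def Hfun (d n : ℕ) (x : Fin n → Fin d → ℝ) : ℝ :=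
  (1 / 2) * dotProduct ((Tmat d n x)⁻¹.mulVec (Svec d n x)) (Svec d n x)

/-- normalization constant `Z_n`. -/
def Zconst (d : ℕ) (ρ : Measure (Fin d → ℝ)) (n : ℕ) : ℝ :=
  ∫ x : Fin n → Fin d → ℝ,
    Set.indicator {x | 0 < (Tmat d n x).det} (fun x => Real.exp (Hfun d n x)) x
    ∂ Measure.pi fun _ => ρ

/-- the Curie-Weiss model of SOC `μ̃_{n,ρ}`. -/
def CW (d : ℕ) (ρ : Measure (Fin d → ℝ)) (n : ℕ) : Measure (Fin n → Fin d → ℝ) :=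
  (Measure.pi fun _ => ρ).withDensity fun x =>
    Set.indicator {x | 0 < (Tmat d n x).det}
      (fun x => ENNReal.ofReal (Real.exp (Hfun d n x) / Zconst d ρ n)) x

/-- covariance matrix `Σ = ∫ z ᵗz dρ(z)`. -/
def covM (d : ℕ) (ρ : Measure (Fin d → ℝ)) : Matrix (Fin d) (Fin d) ℝ :=
  Matrix.of fun i j => ∫ z, z i * z j ∂ρ

/-- `M₄(z) = ∑ (∫ yᵢyⱼyₖyₗ dρ) zᵢzⱼzₖzₗ`. -/
def M4 (d : ℕ) (ρ : Measure (Fin d → ℝ)) (z : Fin d → ℝ) : ℝ :=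
  ∑ i : Fin d, ∑ j : Fin d, ∑ k : Fin d, ∑ l : Fin d,
    (∫ y, y i * y j * y k * y l ∂ρ) * (z i * z j * z k * z l)

/-- symmetric measure: invariant under `z ↦ -z`. -/
def SymMeas (d : ℕ) (ρ : Measure (Fin d → ℝ)) : Prop := ρ.map (fun z => -z) = ρ

/-- condition `(*)` : some Gaussian exponential moment. -/
def CondStar (d : ℕ) (ρ : Measure (Fin d → ℝ)) : Prop :=
  ∃ v₀ > (0:ℝ), Integrable (fun z => Real.exp (v₀ * dotProduct z z)) ρ

/-- the ρ-measure of every vector hyperplane is `< 1/√e`. -/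
def HypLt (d : ℕ) (ρ : Measure (Fin d → ℝ)) : Prop :=
  ∀ s : Fin d → ℝ, s ≠ 0 →
    ρ {z | dotProduct s z = 0} < ENNReal.ofReal (1 / Real.sqrt (Real.exp 1))

/-- non-degeneracy: the ρ-measure of every affine hyperplane is `< 1`. -/
def NonDeg (d : ℕ) (ρ : Measure (Fin d → ℝ)) : Prop :=
  ∀ s : Fin d → ℝ, s ≠ 0 → ∀ c : ℝ, ρ {z | dotProduct s z = c} < 1

-- positive square root of a positive semi-definite matrix (junk value otherwise).
open scoped Classical in
def psqrt (d : ℕ) (M : Matrix (Fin d) (Fin d) ℝ) : Matrix (Fin d) (Fin d) ℝ :=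
  if h : M.PosSemidef then (h.1.eigenvectorUnitary : Matrix (Fin d) (Fin d) ℝ) *
    Matrix.diagonal (Real.sqrt ∘ h.1.eigenvalues) *
    (star h.1.eigenvectorUnitary : Matrix (Fin d) (Fin d) ℝ) else 0

/-- Euclidean norm on `ℝ^d`. -/
def vnorm (d : ℕ) (v : Fin d → ℝ) : ℝ := Real.sqrt (dotProduct v v)

/-- Frobenius norm on `d × d` matrices. -/
def mnorm (d : ℕ) (M : Matrix (Fin d) (Fin d) ℝ) : ℝ :=
  Real.sqrt (∑ i : Fin d, ∑ j : Fin d, (M i j) ^ 2)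

/-- the log-Laplace transform `Λ` of `(Z, Z ᵗZ)`, with values in `(-∞, +∞]`. -/
def Lam (d : ℕ) (ρ : Measure (Fin d → ℝ)) (u : Fin d → ℝ)
    (A : Matrix (Fin d) (Fin d) ℝ) : EReal :=
  ENNReal.log (∫⁻ z, ENNReal.ofReal
    (Real.exp (dotProduct u z + dotProduct (A.mulVec z) z)) ∂ρ)

/-- the Cramér transform `I` of `(Z, Z ᵗZ)`. -/
def CramerI (d : ℕ) (ρ : Measure (Fin d → ℝ)) (x : Fin d → ℝ)
    (M : Matrix (Fin d) (Fin d) ℝ) : EReal :=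
  ⨆ p : (Fin d → ℝ) × {A : Matrix (Fin d) (Fin d) ℝ // A.IsSymm},
    ((dotProduct x p.1 + (M * (p.2 : Matrix (Fin d) (Fin d) ℝ)).trace : ℝ) : EReal)
      - Lam d ρ p.1 p.2

end

/-! By the strong law of large numbers, almost surely the empirical covariance `Cₙ = Bₙ² / n`
converges to `Σ` and the empirical fourth moments `(1/n) ∑ᵢ Uᵢ ⊗ Uᵢ ⊗ Uᵢ ⊗ Uᵢ` converge to those
of `ρ`. Non-degeneracy makes `Σ` positive definite, so `Cₙ` is eventually invertible, and by
continuity of the positive square root and of inversion, `Cₙ^{-1/2} z → Σ^{-1/2} z`. Since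
`(Bₙ²)^{-1/2} = n^{-1/2} Cₙ^{-1/2}` is symmetric, `n ∑ᵢ ⟨z, aᵢₙ⟩⁴` is the quartic form of the
empirical fourth moments evaluated at `Cₙ^{-1/2} z`, which converges to `M₄(Σ^{-1/2} z)`. -/

open Topology
open scoped MatrixOrder

noncomputable section

variable {d : ℕ}

lemma Matrix.inv_smul_of_ne_zero {n : Type*} [Fintype n] [DecidableEq n] {K : Type*} [Field K]
    (A : Matrix n n K) {c : K} (hc : c ≠ 0) : (c • A)⁻¹ = c⁻¹ • A⁻¹ := by
  by_cases hA : IsUnit A.det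
  · exact inv_smul' A (Units.mk0 c hc) hA
  · have hcA : ¬IsUnit (c • A).det := by
      rwa [det_smul, IsUnit.mul_iff, and_iff_right (hc.isUnit.pow _)]
    rw [nonsing_inv_apply_not_isUnit _ hA, nonsing_inv_apply_not_isUnit _ hcA, smul_zero]

section SquareRoot

lemma psqrt_eq_cfcSqrt {M : Matrix (Fin d) (Fin d) ℝ} (h : M.PosSemidef) :
    psqrt d M = CFC.sqrt M := by
  rw [psqrt, dif_pos h, CFC.sqrt_eq_cfc, cfc_nnreal_eq_real _ M, h.1.cfc_eq]
  simp only [IsHermitian.cfc, Unitary.conjStarAlgAut_apply, Function.comp_def]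
  congr 3
  funext i
  simp [h.eigenvalues_nonneg i]

lemma posSemidef_psqrt {M : Matrix (Fin d) (Fin d) ℝ} (h : M.PosSemidef) :
    (psqrt d M).PosSemidef := by
  rw [psqrt_eq_cfcSqrt h]
  exact Matrix.nonneg_iff_posSemidef.mp (CFC.sqrt_nonneg M)

lemma psqrt_mul_self {M : Matrix (Fin d) (Fin d) ℝ} (h : M.PosSemidef) :
    psqrt d M * psqrt d M = M := by
  rw [psqrt_eq_cfcSqrt h]
  exact CFC.sqrt_mul_sqrt_self M h.nonneg

lemma psqrt_smul {M : Matrix (Fin d) (Fin d) ℝ} (h : M.PosSemidef) {c : ℝ} (hc : 0 ≤ c) :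
    psqrt d (c • M) = √c • psqrt d M := by
  rw [psqrt_eq_cfcSqrt (h.smul hc), psqrt_eq_cfcSqrt h]
  refine CFC.sqrt_unique ?_ (smul_nonneg (Real.sqrt_nonneg c) (CFC.sqrt_nonneg M))
  rw [smul_mul_smul_comm, Real.mul_self_sqrt hc, CFC.sqrt_mul_sqrt_self M h.nonneg]

lemma isUnit_det_psqrt {M : Matrix (Fin d) (Fin d) ℝ} (h : M.PosDef) :
    IsUnit (psqrt d M).det := by
  have hsq : (psqrt d M).det * (psqrt d M).det = M.det := by
    rw [← det_mul, psqrt_mul_self h.posSemidef]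
  exact isUnit_iff_ne_zero.2 fun h0 => h.det_pos.ne' (by rw [← hsq, h0, zero_mul])

lemma tendsto_psqrt {α : Type*} {l : Filter α} {A : α → Matrix (Fin d) (Fin d) ℝ}
    {L : Matrix (Fin d) (Fin d) ℝ} (hA : ∀ a, (A a).PosSemidef) (hL : L.PosSemidef)
    (h : Tendsto A l (𝓝 L)) : Tendsto (fun a => psqrt d (A a)) l (𝓝 (psqrt d L)) := by
  simp only [psqrt_eq_cfcSqrt hL, psqrt_eq_cfcSqrt (hA _)]
  -- The L2 operator norm makes matrices a C⋆-algebra without changing their topology.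
  have hcont : ContinuousOn (CFC.sqrt : Matrix (Fin d) (Fin d) ℝ → _) {M | 0 ≤ M} := by
    open scoped Matrix.Norms.L2Operator in exact CFC.continuousOn_sqrt
  exact (hcont L hL.nonneg).tendsto.comp
    (tendsto_nhdsWithin_iff.2 ⟨h, Eventually.of_forall fun a => (hA a).nonneg⟩)

lemma dotProduct_inv_psqrt_mulVec {M : Matrix (Fin d) (Fin d) ℝ} (h : M.PosSemidef)
    (v w : Fin d → ℝ) : v ⬝ᵥ (psqrt d M)⁻¹ *ᵥ w = (psqrt d M)⁻¹ *ᵥ v ⬝ᵥ w := by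
  have hsymm : ((psqrt d M)⁻¹)ᵀ = (psqrt d M)⁻¹ := by
    have hS := (posSemidef_psqrt h).1
    rw [IsHermitian, conjTranspose_eq_transpose_of_trivial] at hS
    rw [transpose_nonsing_inv, hS]
  rw [dotProduct_mulVec, ← mulVec_transpose, hsymm]

end SquareRoot

section QuarticForm

def quarticForm (T : Fin d → Fin d → Fin d → Fin d → ℝ) (v : Fin d → ℝ) : ℝ :=
  ∑ i, ∑ j, ∑ k, ∑ l, T i j k l * (v i * v j * v k * v l)

lemma continuous_quarticForm :
    Continuous fun p : (Fin d → Fin d → Fin d → Fin d → ℝ) × (Fin d → ℝ) =>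
      quarticForm p.1 p.2 := by
  unfold quarticForm
  fun_prop

def fourthMoment (ρ : Measure (Fin d → ℝ)) : Fin d → Fin d → Fin d → Fin d → ℝ :=
  fun i j k l => ∫ y, y i * y j * y k * y l ∂ρ

lemma M4_eq_quarticForm (ρ : Measure (Fin d → ℝ)) (v : Fin d → ℝ) :
    M4 d ρ v = quarticForm (fourthMoment ρ) v := rfl

def empiricalFourthMoment (u : ℕ → Fin d → ℝ) (n : ℕ) : Fin d → Fin d → Fin d → Fin d → ℝ :=
  fun i j k l => (∑ m ∈ Finset.range n, u m i * u m j * u m k * u m l) / n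

lemma dotProduct_pow_four (v w : Fin d → ℝ) :
    (v ⬝ᵥ w) ^ 4 = quarticForm (fun i j k l => w i * w j * w k * w l) v := by
  simp only [quarticForm, dotProduct, pow_succ, pow_zero, one_mul, Finset.sum_mul,
    Finset.mul_sum]
  refine Finset.sum_congr rfl fun i _ => Finset.sum_congr rfl fun j _ =>
    Finset.sum_congr rfl fun k _ => Finset.sum_congr rfl fun l _ => ?_
  ring

lemma quarticForm_empiricalFourthMoment (u : ℕ → Fin d → ℝ) (n : ℕ) (v : Fin d → ℝ) :
    quarticForm (empiricalFourthMoment u n) v = (∑ m ∈ Finset.range n, (v ⬝ᵥ u m) ^ 4) / n := by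
  simp only [dotProduct_pow_four, quarticForm, empiricalFourthMoment, Finset.sum_div,
    Finset.sum_mul]
  simp only [Finset.sum_comm (s := (Finset.univ : Finset (Fin d))) (t := Finset.range n)]
  refine Finset.sum_congr rfl fun m _ => Finset.sum_congr rfl fun i _ => Finset.sum_congr rfl
    fun j _ => Finset.sum_congr rfl fun k _ => Finset.sum_congr rfl fun l _ => ?_
  ring

end QuarticForm

def empiricalCov (u : ℕ → Fin d → ℝ) (n : ℕ) : Matrix (Fin d) (Fin d) ℝ :=
  (n : ℝ)⁻¹ • ∑ j ∈ Finset.range n, vecMulVec (u j) (u j)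

lemma posSemidef_empiricalCov (u : ℕ → Fin d → ℝ) (n : ℕ) : (empiricalCov u n).PosSemidef :=
  (posSemidef_sum _ fun j _ => posSemidef_vecMulVec_self_star (u j)).smul (by positivity)

lemma empiricalCov_apply (u : ℕ → Fin d → ℝ) (n : ℕ) (i j : Fin d) :
    empiricalCov u n i j = (∑ m ∈ Finset.range n, u m i * u m j) / n := by
  simp [empiricalCov, vecMulVec_apply, Matrix.sum_apply, div_eq_inv_mul]

lemma sum_vecMulVec_eq_smul_empiricalCov {n : ℕ} (hn : n ≠ 0) (u : ℕ → Fin d → ℝ) :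
    ∑ j ∈ Finset.range n, vecMulVec (u j) (u j) = (n : ℝ) • empiricalCov u n := by
  rw [empiricalCov, smul_smul, mul_inv_cancel₀ (Nat.cast_ne_zero.2 hn), one_smul]

lemma mul_sum_dotProduct_inv_psqrt_pow_four {n : ℕ} (hn : n ≠ 0) (u : ℕ → Fin d → ℝ)
    (z : Fin d → ℝ) :
    (n : ℝ) * ∑ i ∈ Finset.range n,
        (z ⬝ᵥ (psqrt d (∑ j ∈ Finset.range n, vecMulVec (u j) (u j)))⁻¹ *ᵥ u i) ^ 4 =
      quarticForm (empiricalFourthMoment u n) ((psqrt d (empiricalCov u n))⁻¹ *ᵥ z) := by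
  have hn' : (0 : ℝ) < n := by positivity
  have hC := posSemidef_empiricalCov u n
  have hsqrt : (√(n : ℝ)) ^ 4 = (n : ℝ) ^ 2 := by
    rw [show 4 = 2 * 2 from rfl, pow_mul, Real.sq_sqrt hn'.le]
  rw [quarticForm_empiricalFourthMoment, sum_vecMulVec_eq_smul_empiricalCov hn, psqrt_smul hC hn'.le,
    Matrix.inv_smul_of_ne_zero _ (Real.sqrt_pos.2 hn').ne', Finset.mul_sum, Finset.sum_div]
  refine Finset.sum_congr rfl fun i _ => ?_
  rw [smul_mulVec, dotProduct_smul, smul_eq_mul, dotProduct_inv_psqrt_mulVec hC, mul_pow,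
    inv_pow, hsqrt]
  field_simp

section Moments

variable {ρ : Measure (Fin d → ℝ)}

lemma abs_apply_le_vnorm (v : Fin d → ℝ) (i : Fin d) : |v i| ≤ vnorm d v :=
  Real.abs_le_sqrt <| by
    simpa only [dotProduct, sq] using
      Finset.single_le_sum (fun k _ => mul_self_nonneg (v k)) (Finset.mem_univ i)

lemma integrable_fourth_monomial (h4 : Integrable (fun z => vnorm d z ^ 4) ρ)
    (i j k l : Fin d) : Integrable (fun z : Fin d → ℝ => z i * z j * z k * z l) ρ := by
  refine h4.mono' (by fun_prop) (ae_of_all _ fun z => ?_)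
  have hz := abs_apply_le_vnorm z
  rw [Real.norm_eq_abs, abs_mul, abs_mul, abs_mul, pow_succ, pow_succ, pow_succ, pow_one]
  unfold vnorm at hz ⊢
  gcongr <;> exact hz _

lemma integrable_second_monomial [IsFiniteMeasure ρ]
    (h4 : Integrable (fun z => vnorm d z ^ 4) ρ) (i j : Fin d) :
    Integrable (fun z : Fin d → ℝ => z i * z j) ρ := by
  refine ((integrable_const 1).add h4).mono' (by fun_prop) (ae_of_all _ fun z => ?_)
  have hij : |z i * z j| ≤ vnorm d z ^ 2 := by
    rw [abs_mul, sq]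
    exact mul_le_mul (abs_apply_le_vnorm z i) (abs_apply_le_vnorm z j) (abs_nonneg _)
      (Real.sqrt_nonneg _)
  rw [Real.norm_eq_abs, Pi.add_apply]
  nlinarith [sq_nonneg (vnorm d z ^ 2 - 1)]

lemma dotProduct_sq_eq_sum (x z : Fin d → ℝ) :
    (x ⬝ᵥ z) ^ 2 = ∑ i, ∑ j, x i * x j * (z i * z j) := by
  simp only [dotProduct, sq, Finset.sum_mul_sum]
  refine Finset.sum_congr rfl fun i _ => Finset.sum_congr rfl fun j _ => ?_
  ring

lemma dotProduct_covM_mulVec (h2 : ∀ i j, Integrable (fun z : Fin d → ℝ => z i * z j) ρ)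
    (x : Fin d → ℝ) : x ⬝ᵥ covM d ρ *ᵥ x = ∫ z, (x ⬝ᵥ z) ^ 2 ∂ρ := by
  simp only [dotProduct_sq_eq_sum]
  rw [integral_finsetSum _ fun i _ => integrable_finsetSum _ fun j _ => (h2 i j).const_mul _]
  simp only [integral_finsetSum _ fun j _ => (h2 _ j).const_mul _, integral_const_mul,
    dotProduct, mulVec, covM, of_apply, Finset.mul_sum]
  refine Finset.sum_congr rfl fun i _ => Finset.sum_congr rfl fun j _ => ?_
  ring

lemma posDef_covM [IsProbabilityMeasure ρ] (hnd : NonDeg d ρ)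
    (h2 : ∀ i j, Integrable (fun z : Fin d → ℝ => z i * z j) ρ) : (covM d ρ).PosDef := by
  refine PosDef.of_dotProduct_mulVec_pos ?_ fun x hx => ?_
  · ext i j
    simp only [conjTranspose_apply, covM, of_apply, star_trivial, mul_comm]
  have hint : Integrable (fun z => (x ⬝ᵥ z) ^ 2) ρ := by
    simp only [dotProduct_sq_eq_sum]
    exact integrable_finsetSum _ fun i _ => integrable_finsetSum _ fun j _ =>
      (h2 i j).const_mul _
  have hsupp : Function.support (fun z => (x ⬝ᵥ z) ^ 2) = {z | x ⬝ᵥ z = 0}ᶜ := by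
    ext z
    simp
  rw [star_trivial, dotProduct_covM_mulVec h2,
    integral_pos_iff_support_of_nonneg (fun z => sq_nonneg _) hint, hsupp,
    prob_compl_eq_one_sub (measurableSet_eq_fun (by fun_prop) measurable_const)]
  exact tsub_pos_of_lt (hnd x hx 0)

end Moments

section StrongLaw

variable {E Ω : Type*} [MeasurableSpace E] [MeasurableSpace Ω] {P : Measure Ω}
  {ρ : Measure E} {U : ℕ → Ω → E}

lemma ae_tendsto_average_comp (hUmeas : ∀ i, Measurable (U i)) (hUlaw : ∀ i, P.map (U i) = ρ)
    (hUindep : ProbabilityTheory.iIndepFun U P) {f : E → ℝ} (hf : Measurable f)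
    (hint : Integrable f ρ) :
    ∀ᵐ ω ∂P, Tendsto (fun n : ℕ => (∑ i ∈ Finset.range n, f (U i ω)) / n) atTop
      (𝓝 (∫ y, f y ∂ρ)) := by
  have hmap : ∀ i, P.map (fun ω => f (U i ω)) = ρ.map f := fun i => by
    rw [← hUlaw i, Measure.map_map hf (hUmeas i)]
    rfl
  have hint0 : Integrable (fun ω => f (U 0 ω)) P := by
    rw [← hUlaw 0] at hint
    exact hint.comp_measurable (hUmeas 0)
  have hmean : ∫ ω, f (U 0 ω) ∂P = ∫ y, f y ∂ρ := by
    rw [← hUlaw 0, integral_map (hUmeas 0).aemeasurable hf.aestronglyMeasurable]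
  rw [← hmean]
  exact ProbabilityTheory.strong_law_ae_real _ hint0
    (fun i j hij => (hUindep.indepFun hij).comp hf hf)
    fun i => ⟨(hf.comp (hUmeas i)).aemeasurable, (hf.comp (hUmeas 0)).aemeasurable,
      by rw [hmap, hmap]⟩

end StrongLaw

section EmpiricalMoments

variable {Ω : Type*} [MeasurableSpace Ω] {P : Measure Ω} {ρ : Measure (Fin d → ℝ)}
  {U : ℕ → Ω → Fin d → ℝ}

lemma ae_tendsto_empiricalCov (hUmeas : ∀ i, Measurable (U i)) (hUlaw : ∀ i, P.map (U i) = ρ)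
    (hUindep : ProbabilityTheory.iIndepFun U P)
    (h2 : ∀ i j, Integrable (fun z : Fin d → ℝ => z i * z j) ρ) :
    ∀ᵐ ω ∂P, Tendsto (empiricalCov fun m => U m ω) atTop (𝓝 (covM d ρ)) := by
  have h := ae_all_iff.2 fun i => ae_all_iff.2 fun j =>
    ae_tendsto_average_comp hUmeas hUlaw hUindep (f := fun z => z i * z j) (by fun_prop) (h2 i j)
  filter_upwards [h] with ω hω
  refine tendsto_pi_nhds.2 fun i => tendsto_pi_nhds.2 fun j => ?_
  simpa only [empiricalCov_apply, covM, of_apply] using hω i j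

lemma ae_tendsto_empiricalFourthMoment (hUmeas : ∀ i, Measurable (U i))
    (hUlaw : ∀ i, P.map (U i) = ρ) (hUindep : ProbabilityTheory.iIndepFun U P)
    (h4 : ∀ i j k l, Integrable (fun z : Fin d → ℝ => z i * z j * z k * z l) ρ) :
    ∀ᵐ ω ∂P, Tendsto (empiricalFourthMoment fun m => U m ω) atTop (𝓝 (fourthMoment ρ)) := by
  have h := ae_all_iff.2 fun i => ae_all_iff.2 fun j => ae_all_iff.2 fun k => ae_all_iff.2 fun l =>
    ae_tendsto_average_comp hUmeas hUlaw hUindep (f := fun z => z i * z j * z k * z l)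
      (by fun_prop) (h4 i j k l)
  filter_upwards [h] with ω hω
  exact tendsto_pi_nhds.2 fun i => tendsto_pi_nhds.2 fun j => tendsto_pi_nhds.2 fun k =>
    tendsto_pi_nhds.2 fun l => hω i j k l

end EmpiricalMoments

end

theorem ae_tendsto_quartic_sum_general
    (d : ℕ) (ρ : Measure (Fin d → ℝ)) [IsProbabilityMeasure ρ]
    (hnd : NonDeg d ρ)
    (h4 : Integrable (fun z => vnorm d z ^ 4) ρ)
    (Ω : Type) [MeasurableSpace Ω] (P : Measure Ω)
    (U : ℕ → Ω → Fin d → ℝ) (hUmeas : ∀ i, Measurable (U i))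
    (hUlaw : ∀ i, P.map (U i) = ρ)
    (hUindep : ProbabilityTheory.iIndepFun U P)
    (z : Fin d → ℝ) :
    ∀ᵐ ω ∂P,
      (∀ᶠ n : ℕ in atTop,
        IsUnit (∑ j ∈ Finset.range n, Matrix.vecMulVec (U j ω) (U j ω))) ∧
      Tendsto (fun n : ℕ => (n : ℝ) * ∑ i ∈ Finset.range n,
          (dotProduct z
            ((psqrt d (∑ j ∈ Finset.range n,
              Matrix.vecMulVec (U j ω) (U j ω)))⁻¹.mulVec (U i ω))) ^ 4)
        atTop (nhds (M4 d ρ ((psqrt d (covM d ρ))⁻¹.mulVec z))) := by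
  have h2 := integrable_second_monomial h4
  have hcovM := posDef_covM hnd h2
  filter_upwards [ae_tendsto_empiricalCov hUmeas hUlaw hUindep h2,
    ae_tendsto_empiricalFourthMoment hUmeas hUlaw hUindep (integrable_fourth_monomial h4)]
    with ω hcov hmom
  set u : ℕ → Fin d → ℝ := fun m => U m ω
  constructor
  · have hdet : ∀ᶠ n in atTop, (empiricalCov u n).det ≠ 0 :=
      ((continuous_id.matrix_det.tendsto _).comp hcov).eventually_ne hcovM.det_pos.ne'
    filter_upwards [hdet, eventually_ne_atTop 0] with n hdet hn
    rw [sum_vecMulVec_eq_smul_empiricalCov hn, isUnit_iff_isUnit_det, det_smul]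
    exact ((Nat.cast_ne_zero.2 hn).isUnit.pow _).mul hdet.isUnit
  · have hinv := continuousAt_matrix_inv _
      (NormedRing.inverse_continuousAt (isUnit_det_psqrt hcovM).unit)
    have hv : Tendsto (fun n => (psqrt d (empiricalCov u n))⁻¹ *ᵥ z) atTop
        (𝓝 ((psqrt d (covM d ρ))⁻¹ *ᵥ z)) :=
      ((continuous_id.matrix_mulVec continuous_const).tendsto _).comp <| hinv.tendsto.comp <|
        tendsto_psqrt (posSemidef_empiricalCov u) hcovM.posSemidef hcov
    rw [M4_eq_quarticForm]
    refine ((continuous_quarticForm.tendsto _).comp (hmom.prodMk_nhds hv)).congr' ?_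
    filter_upwards [eventually_ne_atTop 0] with n hn
    exact (mul_sum_dotProduct_inv_psqrt_pow_four hn u z).symm

/-- for i.i.d. `U_i` of law `ρ`, almost surely `B_n² = ∑ U_j ᵗU_j` is
eventually invertible and `n ∑ᵢ ⟨z, (B_n²)^{-1/2} Uᵢ⟩⁴ → M₄(Σ^{-1/2} z)`. -/
theorem ae_tendsto_quartic_sum
    (d : ℕ) (hd : 1 ≤ d) (ρ : Measure (Fin d → ℝ)) [IsProbabilityMeasure ρ]
    (hsym : SymMeas d ρ) (hnd : NonDeg d ρ)
    (h4 : Integrable (fun z => vnorm d z ^ 4) ρ)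
    (Ω : Type) [MeasurableSpace Ω] (P : Measure Ω) [IsProbabilityMeasure P]
    (U : ℕ → Ω → Fin d → ℝ) (hUmeas : ∀ i, Measurable (U i))
    (hUlaw : ∀ i, P.map (U i) = ρ)
    (hUindep : ProbabilityTheory.iIndepFun U P)
    (z : Fin d → ℝ) :
    ∀ᵐ ω ∂P,
      (∀ᶠ n : ℕ in atTop,
        IsUnit (∑ j ∈ Finset.range n, Matrix.vecMulVec (U j ω) (U j ω))) ∧
      Tendsto (fun n : ℕ => (n : ℝ) * ∑ i ∈ Finset.range n,
          (dotProduct z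
            ((psqrt d (∑ j ∈ Finset.range n,
              Matrix.vecMulVec (U j ω) (U j ω)))⁻¹.mulVec (U i ω))) ^ 4)
        atTop (nhds (M4 d ρ ((psqrt d (covM d ρ))⁻¹.mulVec z))) :=
  ae_tendsto_quartic_sum_general d ρ hnd h4 Ω P U hUmeas hUlaw hUindep z
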